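/- arXiv:1403.5303 — 2 statements merged into one kernel-verified Lean document; each statement's English description precedes it below -/
import Mathlib

section
/- Let A be a cocomplete category, c a comonad on A whose underlying functor preserves colimits of shape J for a filtered category J, and X a c-coalgebra whose underlying object u(X) is J-presentable in A (i.e., Hom_A(u(X), −) preserves colimits of shape J). Then X is J-presentable in the category of c-coalgebras, i.e., Hom_{A_c}(X, −) preserves colimits of shape J. -/
/-!
A map `X ⟶ colim Fⱼ` of coalgebras factors, in `A`, through some `g : uX ⟶ uFⱼ`, since `uX` is
presentable and `u` preserves colimits. The map `g` need not be a coalgebra map, but the two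
composites `uX ⟶ c(uFⱼ)` measuring its failure agree in `Hom(uX, colim c(uFⱼ))`, because
`c` preserves the colimit; so, by presentability and filteredness, they already agree after
some transition map `Fⱼ ⟶ Fₖ`, and `g` followed by it is a coalgebra map. Uniqueness of
factorizations is inherited from `A` because `u` is faithful.
-/

open CategoryTheory CategoryTheory.Limits Opposite

namespace CategoryTheory.Comonad.Coalgebra

variable {A : Type u} [Category.{v} A] {c : Comonad A} {J : Type v} [SmallCategory J]
  [IsFiltered J] {F : J ⥤ c.Coalgebra} {cc : Cocone F} {X : c.Coalgebra}

lemma exists_comp_ι_eq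
    (hu : IsColimit ((coyoneda.obj (op X.A)).mapCocone (c.forget.mapCocone cc)))
    (hcu : IsColimit ((coyoneda.obj (op X.A)).mapCocone
      (c.toFunctor.mapCocone (c.forget.mapCocone cc))))
    (f : X ⟶ cc.pt) : ∃ (j : J) (g : X ⟶ F.obj j), g ≫ cc.ι.app j = f := by
  obtain ⟨j, g, hg⟩ := Types.jointly_surjective _ hu f.f
  change X.A ⟶ (F.obj j).A at g
  change g ≫ (cc.ι.app j).f = f.f at hg
  have hcolim : (X.a ≫ c.map g) ≫ c.map (cc.ι.app j).f =
      (g ≫ (F.obj j).a) ≫ c.map (cc.ι.app j).f := by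
    rw [Category.assoc, Category.assoc, ← Functor.map_comp, hg, f.h, (cc.ι.app j).h, ← hg,
      Category.assoc]
    rfl
  obtain ⟨k, t, ht⟩ := (Types.FilteredColimit.isColimit_eq_iff' hcu _ _).mp hcolim
  change (X.a ≫ c.map g) ≫ c.map (F.map t).f = (g ≫ (F.obj j).a) ≫ c.map (F.map t).f at ht
  refine ⟨k, ⟨g ≫ (F.map t).f, ?_⟩, ?_⟩
  · rw [Functor.map_comp, ← Category.assoc, ht, Category.assoc, Category.assoc, (F.map t).h]
  · ext1
    simp only [comp_f, Category.assoc]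
    rw [← comp_f, cc.w, hg]

lemma exists_comp_map_eq
    (hu : IsColimit ((coyoneda.obj (op X.A)).mapCocone (c.forget.mapCocone cc)))
    {i j : J} (gi : X ⟶ F.obj i) (gj : X ⟶ F.obj j) (h : gi ≫ cc.ι.app i = gj ≫ cc.ι.app j) :
    ∃ (k : J) (p : i ⟶ k) (q : j ⟶ k), gi ≫ F.map p = gj ≫ F.map q := by
  obtain ⟨k, p, q, hpq⟩ := (Types.FilteredColimit.isColimit_eq_iff _ hu).mp
    (congrArg Hom.f h)
  exact ⟨k, p, q, Hom.ext hpq⟩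

noncomputable def isColimitCoyonedaMapCocone
    (hu : IsColimit ((coyoneda.obj (op X.A)).mapCocone (c.forget.mapCocone cc)))
    (hcu : IsColimit ((coyoneda.obj (op X.A)).mapCocone
      (c.toFunctor.mapCocone (c.forget.mapCocone cc)))) :
    IsColimit ((coyoneda.obj (op X)).mapCocone cc) :=
  Types.FilteredColimit.isColimitOf _ _
    (fun f => by
      obtain ⟨j, g, hg⟩ := exists_comp_ι_eq hu hcu f
      exact ⟨j, g, hg.symm⟩)
    (fun _ _ gi gj h => exists_comp_map_eq hu gi gj h)

end CategoryTheory.Comonad.Coalgebra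

theorem coalgebra_presentable_of_underlying_presentable_general {A : Type u} [Category.{v} A]
    (c : Comonad A) (J : Type v) [SmallCategory J] [IsFiltered J]
    [PreservesColimitsOfShape J c.toFunctor] (X : c.Coalgebra)
    (hX : Nonempty (PreservesColimitsOfShape J (coyoneda.obj (op (c.forget.obj X))))) :
    Nonempty (PreservesColimitsOfShape J (coyoneda.obj (op X))) := by
  obtain ⟨hX⟩ := hX
  refine ⟨⟨fun {F} => ⟨fun {cc} hcc => ⟨?_⟩⟩⟩⟩
  -- `c.forget` is a left adjoint, so it preserves every colimit.
  have hu : IsColimit (c.forget.mapCocone cc) := isColimitOfPreserves c.forget hcc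
  let homFromX := coyoneda.obj (op (c.forget.obj X))
  exact Comonad.Coalgebra.isColimitCoyonedaMapCocone (isColimitOfPreserves homFromX hu)
    (isColimitOfPreserves homFromX (isColimitOfPreserves c.toFunctor hu))

/-- Let `A` be a cocomplete category, `c` a comonad on `A` whose underlying functor
preserves colimits of shape `J` for a filtered category `J`, and `X` a `c`-coalgebra
whose underlying object `u(X)` is `J`-presentable in `A` (i.e. `Hom_A(u(X), -)`
preserves colimits of shape `J`).  Then `X` is `J`-presentable in the category of
`c`-coalgebras, i.e. `Hom_{A_c}(X, -)` preserves colimits of shape `J`. -/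
theorem coalgebra_presentable_of_underlying_presentable {A : Type u} [Category.{v} A]
    [HasColimits A] (c : Comonad A) (J : Type v) [SmallCategory J] [IsFiltered J]
    [PreservesColimitsOfShape J c.toFunctor] (X : c.Coalgebra)
    (hX : Nonempty (PreservesColimitsOfShape J (coyoneda.obj (op (c.forget.obj X))))) :
    Nonempty (PreservesColimitsOfShape J (coyoneda.obj (op X))) :=
  coalgebra_presentable_of_underlying_presentable_general c J X hX
end

section
/- Let A be a cocomplete category, c a comonad on A whose underlying functor preserves colimits of shape J for a filtered category J, and X a c-coalgebra that is J-presentable in A_c (i.e., Hom_{A_c}(X, −) preserves colimits of shape J). Then the underlying object u(X) is J-presentable in A. -/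
open CategoryTheory CategoryTheory.Limits Opposite

/-!
The adjunction `u ⊣ cofree` gives `Hom_A(uX, -) ≅ Hom_{A_c}(X, -) ∘ cofree`. Since `u` creates
colimits and `u ∘ cofree = c`, the cofree functor preserves colimits of shape `J` whenever `c`
does, and hence so does the composite `Hom_{A_c}(X, -) ∘ cofree`.
-/

namespace CategoryTheory

lemma Adjunction.preservesColimitsOfShape_coyoneda_leftAdjoint_obj {C : Type*} [Category.{v} C]
    {D : Type*} [Category.{v} D] {F : C ⥤ D} {G : D ⥤ C} (adj : F ⊣ G) (J : Type*) [Category J]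
    [PreservesColimitsOfShape J G] (X : C)
    [PreservesColimitsOfShape J (coyoneda.obj (Opposite.op X))] :
    PreservesColimitsOfShape J (coyoneda.obj (Opposite.op (F.obj X))) :=
  preservesColimitsOfShape_of_natIso
    (show G ⋙ coyoneda.obj (Opposite.op X) ≅ coyoneda.obj (Opposite.op (F.obj X)) from
      (adj.compCoyonedaIso.app (Opposite.op X)).symm)

lemma Comonad.preservesColimitsOfShape_cofree {A : Type*} [Category A] (c : Comonad A)
    (J : Type*) [Category J] [PreservesColimitsOfShape J c.toFunctor] :
    PreservesColimitsOfShape J c.cofree :=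
  have : PreservesColimitsOfShape J (c.cofree ⋙ c.forget) :=
    inferInstanceAs (PreservesColimitsOfShape J c.toFunctor)
  preservesColimitsOfShape_of_reflects_of_preserves c.cofree c.forget

end CategoryTheory

theorem underlying_presentable_of_coalgebra_presentable_general {A : Type u} [Category.{v} A]
    (c : Comonad A) (J : Type v) [SmallCategory J]
    [PreservesColimitsOfShape J c.toFunctor] (X : c.Coalgebra)
    (hX : Nonempty (PreservesColimitsOfShape J (coyoneda.obj (op X)))) :
    Nonempty (PreservesColimitsOfShape J (coyoneda.obj (op (c.forget.obj X)))) := by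
  obtain ⟨hX⟩ := hX
  have := c.preservesColimitsOfShape_cofree J
  exact ⟨c.adj.preservesColimitsOfShape_coyoneda_leftAdjoint_obj J X⟩

/-- Let `A` be a cocomplete category, `c` a comonad on `A` whose underlying functor
preserves colimits of shape `J` for a filtered category `J`, and `X` a `c`-coalgebra
that is `J`-presentable in `A_c` (i.e. `Hom_{A_c}(X, -)` preserves colimits of shape
`J`).  Then the underlying object `u(X)` is `J`-presentable in `A`. -/
theorem underlying_presentable_of_coalgebra_presentable {A : Type u} [Category.{v} A]
    [HasColimits A] (c : Comonad A) (J : Type v) [SmallCategory J] [IsFiltered J]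
    [PreservesColimitsOfShape J c.toFunctor] (X : c.Coalgebra)
    (hX : Nonempty (PreservesColimitsOfShape J (coyoneda.obj (op X)))) :
    Nonempty (PreservesColimitsOfShape J (coyoneda.obj (op (c.forget.obj X)))) :=
  underlying_presentable_of_coalgebra_presentable_general c J X hX
end
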